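/- Let G = Sp₂ₙ(ℂ). The radical ideal in ℂ[sp₂ₙ] defining the closure of the G-orbit of rank-one matrices in sp₂ₙ(ℂ) is generated by the 2×2 minors of the matrix entries. -/

import Mathlib

open MvPolynomial Matrix

/-- The standard symplectic structure matrix `J = ((0,I),(-I,0))`. -/
noncomputable def Jmat (n : ℕ) : Matrix (Fin n ⊕ Fin n) (Fin n ⊕ Fin n) ℂ :=
  Matrix.of fun p q =>
    match p, q with
    | Sum.inl i, Sum.inr j => if i = j then 1 else 0
    | Sum.inr i, Sum.inl j => if i = j then -1 else 0
    | _, _ => 0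

/-- The matrix of coordinates of a point `z` of the space of `2n × 2n` matrices. -/
noncomputable def matOf (n : ℕ) (z : (Fin n ⊕ Fin n) × (Fin n ⊕ Fin n) → ℂ) :
    Matrix (Fin n ⊕ Fin n) (Fin n ⊕ Fin n) ℂ :=
  Matrix.of fun p q => z (p, q)

/-- The vanishing ideal of a set of points of affine space. -/
noncomputable def vIdeal {σ : Type*} (s : Set (σ → ℂ)) : Ideal (MvPolynomial σ ℂ) where
  carrier := {p | ∀ z ∈ s, MvPolynomial.eval z p = 0}
  add_mem' := by intro a b ha hb z hz; simp [ha z hz, hb z hz]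
  zero_mem' := by intro z hz; simp
  smul_mem' := by intro c p hp z hz; simp [smul_eq_mul, hp z hz]

/-- The linear equations cutting out `sp₂ₙ ⊆ gl₂ₙ`, i.e. the entries of `MᵀJ + JM`. -/
noncomputable def spLinEqns (n : ℕ) :
    Set (MvPolynomial ((Fin n ⊕ Fin n) × (Fin n ⊕ Fin n)) ℂ) :=
  {p | ∃ q r : Fin n ⊕ Fin n,
    p = ∑ k : Fin n ⊕ Fin n,
      (C (Jmat n k r) * X (k, q) + C (Jmat n q k) * X (k, r))}

/-- The `2×2` minors of the matrix of generic coordinates. -/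
noncomputable def minors2 (n : ℕ) :
    Set (MvPolynomial ((Fin n ⊕ Fin n) × (Fin n ⊕ Fin n)) ℂ) :=
  {p | ∃ i₁ i₂ j₁ j₂ : Fin n ⊕ Fin n,
    p = X (i₁, j₁) * X (i₂, j₂) - X (i₁, j₂) * X (i₂, j₁)}

/-!
Multiplying by `J` turns `sp₂ₙ` into the space of symmetric matrices, and the symmetric matrices
of rank at most one are exactly the `v vᵀ` over `ℂ`. After this linear change of coordinates the
vanishing ideal becomes the kernel of the Veronese map `X (p, q) ↦ Y p * Y q`. Modulo the symmetry
relations `X (a, b) = X (b, a)` and the `2 × 2` minors, a monomial `∏ X (pₖ, qₖ)` depends only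
on the multiset of all its indices `pₖ, qₖ`: two pairings of the same multiset are connected by
exchanges `X (a, b) X (c, d) ≡ X (a, d) X (c, b)`. Hence choosing one monomial in each fibre gives
a left inverse of the Veronese map on the quotient, and its kernel is generated by those relations.
-/

noncomputable section Veronese

variable {ι R : Type*} [CommRing R]

theorem MvPolynomial.prod_map_X_eq_monomial [DecidableEq ι] (μ : Multiset ι) :
    (μ.map X).prod = (monomial (Multiset.toFinsupp μ) 1 : MvPolynomial ι R) := by
  induction μ using Multiset.induction_on with
  | empty => simp
  | cons a μ ih =>
    rw [Multiset.map_cons, Multiset.prod_cons, ih, ← Multiset.singleton_add,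
      Multiset.toFinsupp_add, Multiset.toFinsupp_singleton, X, monomial_mul, one_mul]

def veronese : MvPolynomial (ι × ι) R →ₐ[R] MvPolynomial ι R :=
  aeval fun p => X p.1 * X p.2

variable (ι R) in
def veroneseIdeal : Ideal (MvPolynomial (ι × ι) R) :=
  Ideal.span ({f | ∃ a b : ι, f = X (a, b) - X (b, a)} ∪
    {f | ∃ i₁ i₂ j₁ j₂ : ι, f = X (i₁, j₁) * X (i₂, j₂) - X (i₁, j₂) * X (i₂, j₁)})

def pairIndices (M : Multiset (ι × ι)) : Multiset ι :=
  M.bind fun p => {p.1, p.2}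

@[simp]
lemma pairIndices_zero : pairIndices (0 : Multiset (ι × ι)) = 0 := rfl

@[simp]
lemma pairIndices_cons (p : ι × ι) (M : Multiset (ι × ι)) :
    pairIndices (p ::ₘ M) = p.1 ::ₘ p.2 ::ₘ pairIndices M := by
  rw [pairIndices, Multiset.cons_bind, Multiset.insert_eq_cons, Multiset.cons_add,
    Multiset.singleton_add]
  rfl

lemma card_pairIndices (M : Multiset (ι × ι)) :
    Multiset.card (pairIndices M) = 2 * Multiset.card M := by
  induction M using Multiset.induction_on with
  | empty => rfl
  | cons p M ih => simp [ih]; ring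

@[simp]
lemma veronese_X (p : ι × ι) : veronese (X p : MvPolynomial (ι × ι) R) = X p.1 * X p.2 :=
  aeval_X _ _

lemma veronese_prod_map_X (M : Multiset (ι × ι)) :
    veronese ((M.map X).prod : MvPolynomial (ι × ι) R) = ((pairIndices M).map X).prod := by
  induction M using Multiset.induction_on with
  | empty => simp
  | cons p M ih =>
    rw [Multiset.map_cons, Multiset.prod_cons, map_mul, ih, pairIndices_cons, veronese_X]
    simp [mul_assoc]

local notation "mk" => Ideal.Quotient.mk (veroneseIdeal ι R)

lemma mk_X_comm (a b : ι) : mk (X (a, b)) = mk (X (b, a)) :=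
  Ideal.Quotient.eq.mpr (Ideal.subset_span (Or.inl ⟨a, b, rfl⟩))

lemma mk_X_mul_mk_X_swap (a b c d : ι) :
    mk (X (a, b)) * mk (X (c, d)) = mk (X (a, d)) * mk (X (c, b)) := by
  simp only [← map_mul]
  exact Ideal.Quotient.eq.mpr (Ideal.subset_span (Or.inr ⟨a, c, b, d, rfl⟩))

lemma exists_mk_prod_eq_X_mul {M : Multiset (ι × ι)} {a : ι} (ha : a ∈ pairIndices M) :
    ∃ c N, mk (M.map X).prod = mk (X (a, c) * (N.map X).prod) ∧
      pairIndices M = a ::ₘ c ::ₘ pairIndices N := by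
  obtain ⟨⟨p, q⟩, hpq, hapq⟩ := Multiset.mem_bind.mp ha
  obtain ⟨N, rfl⟩ := Multiset.exists_cons_of_mem hpq
  simp only [Multiset.insert_eq_cons, Multiset.mem_cons, Multiset.mem_singleton] at hapq
  rcases hapq with rfl | rfl
  · exact ⟨q, N, by simp, by simp⟩
  · refine ⟨p, N, ?_, by rw [pairIndices_cons, Multiset.cons_swap]⟩
    rw [Multiset.map_cons, Multiset.prod_cons, map_mul, map_mul, mk_X_comm]

lemma mk_prod_eq_of_pairIndices_eq {M M' : Multiset (ι × ι)}
    (h : pairIndices M = pairIndices M') : mk (M.map X).prod = mk (M'.map X).prod := by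
  induction M using Multiset.induction_on generalizing M' with
  | empty =>
    have hcard := congrArg Multiset.card h
    rw [card_pairIndices, card_pairIndices] at hcard
    rw [Multiset.card_eq_zero.mp (by simpa using hcard.symm : Multiset.card M' = 0)]
  | cons p M ih =>
    obtain ⟨a, c⟩ := p
    have ha : a ∈ pairIndices M' := by simp [← h]
    obtain ⟨c', N, hM', hN⟩ := exists_mk_prod_eq_X_mul (R := R) ha
    rw [pairIndices_cons, hN] at h
    have h' := (Multiset.cons_inj_right a).mp h
    rw [hM', Multiset.map_cons, Multiset.prod_cons, map_mul, map_mul]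
    by_cases hcc : c = c'
    · subst hcc
      rw [ih ((Multiset.cons_inj_right c).mp h')]
    · have hc : c ∈ pairIndices N :=
        (Multiset.mem_cons.mp (h' ▸ Multiset.mem_cons_self c _)).resolve_left hcc
      obtain ⟨d, N', hN', hN'eq⟩ := exists_mk_prod_eq_X_mul (R := R) hc
      have hM : pairIndices M = pairIndices ((d, c') ::ₘ N') := by
        rw [hN'eq, Multiset.cons_swap c' c] at h'
        rw [(Multiset.cons_inj_right c).mp h', pairIndices_cons, Multiset.cons_swap]
      rw [ih hM, hN', Multiset.map_cons, Multiset.prod_cons, map_mul, map_mul,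
        mk_X_comm c, ← mul_assoc, ← mul_assoc, mk_X_mul_mk_X_swap a c d c']

open Classical in
def pairingMonomial (e : ι →₀ ℕ) : MvPolynomial (ι × ι) R :=
  if h : ∃ M : Multiset (ι × ι), pairIndices M = e.toMultiset then (h.choose.map X).prod else 0

def veroneseSection : MvPolynomial ι R →ₗ[R] MvPolynomial (ι × ι) R ⧸ veroneseIdeal ι R :=
  (basisMonomials ι R).constr R fun e => mk (pairingMonomial e)

lemma veroneseSection_comp_veronese :
    veroneseSection ∘ₗ veronese.toLinearMap =
      (Ideal.Quotient.mkₐ R (veroneseIdeal ι R)).toLinearMap := by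
  classical
  refine (basisMonomials (ι × ι) R).ext fun d => ?_
  obtain ⟨M, rfl⟩ : ∃ M : Multiset (ι × ι), Multiset.toFinsupp M = d :=
    ⟨d.toMultiset, Finsupp.toMultiset_toFinsupp d⟩
  have hex : ∃ M' : Multiset (ι × ι),
      pairIndices M' = (Multiset.toFinsupp (pairIndices M)).toMultiset := ⟨M, by simp⟩
  have hsec :
      veroneseSection (monomial (Multiset.toFinsupp (pairIndices M)) 1 : MvPolynomial ι R) =
        mk (pairingMonomial (Multiset.toFinsupp (pairIndices M))) :=
    (basisMonomials ι R).constr_basis R _ _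
  simp only [coe_basisMonomials, LinearMap.comp_apply, AlgHom.toLinearMap_apply,
    ← prod_map_X_eq_monomial, veronese_prod_map_X]
  rw [prod_map_X_eq_monomial, hsec, pairingMonomial, dif_pos hex, Ideal.Quotient.mkₐ_eq_mk]
  exact mk_prod_eq_of_pairIndices_eq (hex.choose_spec.trans (by simp))

theorem ker_veronese : RingHom.ker (veronese (ι := ι) (R := R)) = veroneseIdeal ι R := by
  refine le_antisymm (fun f hf => ?_) (Ideal.span_le.mpr ?_)
  · rw [← Ideal.Quotient.eq_zero_iff_mem, ← Ideal.Quotient.mkₐ_eq_mk R,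
      ← AlgHom.toLinearMap_apply, ← veroneseSection_comp_veronese, LinearMap.comp_apply,
      AlgHom.toLinearMap_apply, RingHom.mem_ker.mp hf, map_zero]
  · rintro f (⟨a, b, rfl⟩ | ⟨i₁, i₂, j₁, j₂, rfl⟩) <;> simp <;> ring

end Veronese

theorem Matrix.exists_eq_vecMulVec_of_rank_le_one {K m n : Type*} [Field K]
    [Fintype n] {A : Matrix m n K} (h : A.rank ≤ 1) : ∃ u w, A = vecMulVec u w := by
  have := FiniteDimensional.span_of_finite K (Set.finite_range A.col)
  rw [rank_eq_finrank_span_cols, finrank_le_one_iff] at h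
  obtain ⟨v, hv⟩ := h
  choose c hc using fun j => hv ⟨A.col j, Submodule.subset_span ⟨j, rfl⟩⟩
  refine ⟨v, c, Matrix.ext fun i j => ?_⟩
  have := congrFun (congrArg Subtype.val (hc j)) i
  simp only [SetLike.val_smul, Pi.smul_apply, smul_eq_mul, col_apply] at this
  rw [vecMulVec_apply, ← this, mul_comm]

noncomputable section Symplectic

variable {n : ℕ}

def spSign : Fin n ⊕ Fin n → ℂ := Sum.elim (fun _ => 1) (fun _ => -1)

@[simp]
lemma spSign_swap (p : Fin n ⊕ Fin n) : spSign p.swap = -spSign p := by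
  cases p <;> simp [spSign]

lemma Jmat_apply (p q : Fin n ⊕ Fin n) : Jmat n p q = if q = p.swap then spSign p else 0 := by
  cases p <;> cases q <;> simp [Jmat, spSign, eq_comm]

lemma Jmat_antisymm (p q : Fin n ⊕ Fin n) : Jmat n p q = -Jmat n q p := by
  cases p <;> cases q <;> simp [Jmat, eq_comm, apply_ite]

def spLinEqn (q r : Fin n ⊕ Fin n) : MvPolynomial ((Fin n ⊕ Fin n) × (Fin n ⊕ Fin n)) ℂ :=
  ∑ k, (C (Jmat n k r) * X (k, q) + C (Jmat n q k) * X (k, r))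

lemma spLinEqn_eq (q r : Fin n ⊕ Fin n) :
    spLinEqn q r = C (-spSign r) * X (r.swap, q) + C (spSign q) * X (q.swap, r) := by
  simp [spLinEqn, Jmat_antisymm _ r, Jmat_apply, Finset.sum_add_distrib, apply_ite C, ite_mul]

lemma eval_spLinEqn (z : (Fin n ⊕ Fin n) × (Fin n ⊕ Fin n) → ℂ) (q r : Fin n ⊕ Fin n) :
    eval z (spLinEqn q r) = ((matOf n z)ᵀ * Jmat n + Jmat n * matOf n z) q r := by
  simp [spLinEqn, Matrix.mul_apply, matOf, Finset.sum_add_distrib, mul_comm]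

/-- Pullback along `M ↦ -i M J`, which carries the symmetric matrices onto `sp₂ₙ`; the factor `i`
makes it an involution. -/
def spTwist : MvPolynomial ((Fin n ⊕ Fin n) × (Fin n ⊕ Fin n)) ℂ →ₐ[ℂ]
    MvPolynomial ((Fin n ⊕ Fin n) × (Fin n ⊕ Fin n)) ℂ :=
  aeval fun p => C (Complex.I * spSign p.2) * X (p.1, p.2.swap)

@[simp]
lemma spTwist_X (p : (Fin n ⊕ Fin n) × (Fin n ⊕ Fin n)) :
    spTwist (X p) = C (Complex.I * spSign p.2) * X (p.1, p.2.swap) :=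
  aeval_X _ _

lemma spTwist_spTwist (f : MvPolynomial ((Fin n ⊕ Fin n) × (Fin n ⊕ Fin n)) ℂ) :
    spTwist (spTwist f) = f := by
  suffices spTwist.comp spTwist = AlgHom.id ℂ _ from AlgHom.congr_fun this f
  refine algHom_ext fun ⟨a, b⟩ => ?_
  have hI : Complex.I * spSign b * (Complex.I * spSign b.swap) = 1 := by
    cases b <;> simp [spSign]
  rw [AlgHom.comp_apply, spTwist_X, map_mul, spTwist_X, algHom_C, algebraMap_eq, ← mul_assoc,
    ← C_mul, hI, C_1, one_mul, Sum.swap_swap, AlgHom.id_apply]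

lemma veroneseIdeal_le_comap_spTwist :
    veroneseIdeal (Fin n ⊕ Fin n) ℂ ≤ (Ideal.span (spLinEqns n ∪ minors2 n)).comap spTwist := by
  refine Ideal.span_le.mpr ?_
  rintro f (⟨a, b, rfl⟩ | ⟨i₁, i₂, j₁, j₂, rfl⟩)
  · have h : spTwist (X (a, b) - X (b, a)) =
        C (Complex.I * spSign a * spSign b) * spLinEqn b.swap a.swap := by
      rw [spLinEqn_eq]
      cases a <;> cases b <;> simp [spSign] <;> ring
    rw [SetLike.mem_coe, Ideal.mem_comap, h]
    exact Ideal.mul_mem_left _ _ (Ideal.subset_span (Or.inl ⟨_, _, rfl⟩))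
  · have h : spTwist (X (i₁, j₁) * X (i₂, j₂) - X (i₁, j₂) * X (i₂, j₁)) =
        C (Complex.I * spSign j₁) * C (Complex.I * spSign j₂) *
          (X (i₁, j₁.swap) * X (i₂, j₂.swap) - X (i₁, j₂.swap) * X (i₂, j₁.swap)) := by
      simp; ring
    rw [SetLike.mem_coe, Ideal.mem_comap, h]
    exact Ideal.mul_mem_left _ _ (Ideal.subset_span (Or.inr ⟨_, _, _, _, rfl⟩))

/-- The rank-one element `-i v vᵀ J` of `sp₂ₙ`. -/
def spRankOnePoint (v : Fin n ⊕ Fin n → ℂ) : (Fin n ⊕ Fin n) × (Fin n ⊕ Fin n) → ℂ :=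
  fun p => v p.1 * (Complex.I * spSign p.2 * v p.2.swap)

lemma eval_veronese_spTwist (v : Fin n ⊕ Fin n → ℂ)
    (f : MvPolynomial ((Fin n ⊕ Fin n) × (Fin n ⊕ Fin n)) ℂ) :
    eval v (veronese (spTwist f)) = eval (spRankOnePoint v) f := by
  induction f using MvPolynomial.induction_on with
  | C a => simp
  | add p q hp hq => simp [hp, hq]
  | mul_X p q ih =>
    simp only [map_mul, ih, spTwist_X, veronese_X, algHom_C, algebraMap_eq, eval_C,
      eval_X, spRankOnePoint]
    ring

lemma spRankOnePoint_mem (v : Fin n ⊕ Fin n → ℂ) :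
    (matOf n (spRankOnePoint v))ᵀ * Jmat n + Jmat n * matOf n (spRankOnePoint v) = 0 ∧
      (matOf n (spRankOnePoint v)).rank ≤ 1 := by
  refine ⟨Matrix.ext fun q r => ?_, ?_⟩
  · rw [← eval_spLinEqn, spLinEqn_eq]
    simp [spRankOnePoint]
    ring
  · exact (rank_vecMulVec_le v fun q => Complex.I * spSign q * v q.swap)

end Symplectic

/-- the (radical) vanishing ideal of the closure of the orbit of
rank-one matrices in `sp₂ₙ(ℂ)` — i.e. of the set of matrices `M ∈ sp₂ₙ` with
`rank M ≤ 1` — is generated by the `2×2` minors together with the linear equations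
defining `sp₂ₙ` inside `gl₂ₙ`. -/
theorem stmt13 (n : ℕ) :
    Ideal.span (spLinEqns n ∪ minors2 n) =
      vIdeal {z : (Fin n ⊕ Fin n) × (Fin n ⊕ Fin n) → ℂ |
        (matOf n z)ᵀ * Jmat n + Jmat n * matOf n z = 0 ∧ (matOf n z).rank ≤ 1} := by
  refine le_antisymm (Ideal.span_le.mpr ?_) fun f hf => ?_
  · rintro g (⟨q, r, rfl⟩ | ⟨i₁, i₂, j₁, j₂, rfl⟩) z ⟨hsp, hrank⟩
    · exact (eval_spLinEqn z q r).trans (congrFun (congrFun hsp q) r)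
    · obtain ⟨u, w, huw⟩ := exists_eq_vecMulVec_of_rank_le_one hrank
      have hz (p) : z p = u p.1 * w p.2 := congrFun (congrFun huw p.1) p.2
      simp only [map_sub, map_mul, eval_X, hz]
      ring
  · have hker : veronese (spTwist f) = 0 := MvPolynomial.funext fun v => by
      rw [eval_veronese_spTwist, map_zero]
      exact hf _ (spRankOnePoint_mem v)
    rw [← RingHom.mem_ker, ker_veronese] at hker
    simpa only [Ideal.mem_comap, spTwist_spTwist] using veroneseIdeal_le_comap_spTwist hker
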